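/- The sharp transformation exchanging dissipation parameters μ and 2−μ: Let μ ∈ ℝ and let v : (0,∞)×ℝ → ℝ be twice continuously differentiable. Define v♯(t,x) = t^{μ−1} v(t,x). Then v satisfies ∂ₜ²v − ∂ₓ²v + (μ/t)∂ₜv = 0 on (0,∞)×ℝ if and only if v♯ satisfies ∂ₜ²v♯ − ∂ₓ²v♯ + ((2−μ)/t)∂ₜv♯ = 0 on (0,∞)×ℝ. Moreover, if s > 0 and v(s,·) ≡ 0 with ∂ₜv(s,·) = v₁, then v♯(s,·) ≡ 0 and ∂ₜv♯(s,·) = s^{μ−1} v₁. -/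

import Mathlib

/-!
By the product rule, `∂ₜ² + ((2-μ)/t) ∂ₜ` applied to `t^{μ-1} v` equals `t^{μ-1} (∂ₜ² + (μ/t) ∂ₜ) v`:
the zeroth-order terms cancel since `(μ-1)(μ-2) + (2-μ)(μ-1) = 0`, and the first-order ones combine
as `2(μ-1) + (2-μ) = μ`. Multiplication by `t^{μ-1}` commutes with `∂ₓ²` and `t^{μ-1} ≠ 0`, so the
two equations are equivalent; the data at `t = s` follow from the product rule once more.
-/

open Real Set Filter Topology

noncomputable def epdOperator (μ : ℝ) (v : ℝ → ℝ → ℝ) (t x : ℝ) : ℝ :=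
  iteratedDeriv 2 (fun τ => v τ x) t - iteratedDeriv 2 (fun y => v t y) x +
    μ / t * deriv (fun τ => v τ x) t

section RpowMul

variable {f : ℝ → ℝ} {p t : ℝ}

theorem hasDerivAt_rpow_mul (ht : t ≠ 0) (hf : DifferentiableAt ℝ f t) :
    HasDerivAt (fun τ => τ ^ p * f τ) (p * t ^ (p - 1) * f t + t ^ p * deriv f t) t :=
  (hasDerivAt_rpow_const (Or.inl ht)).mul hf.hasDerivAt

theorem iteratedDeriv_two_rpow_mul (ht : t ≠ 0) (hf : ∀ᶠ τ in 𝓝 t, DifferentiableAt ℝ f τ)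
    (hf' : DifferentiableAt ℝ (deriv f) t) :
    iteratedDeriv 2 (fun τ => τ ^ p * f τ) t =
      p * ((p - 1) * t ^ (p - 1 - 1)) * f t + 2 * p * t ^ (p - 1) * deriv f t +
        t ^ p * iteratedDeriv 2 f t := by
  have hderiv : deriv (fun τ => τ ^ p * f τ) =ᶠ[𝓝 t]
      fun τ => p * τ ^ (p - 1) * f τ + τ ^ p * deriv f τ := by
    filter_upwards [hf, eventually_ne_nhds ht] with τ hfτ hτ
    exact (hasDerivAt_rpow_mul hτ hfτ).deriv
  have hderiv_deriv : HasDerivAt (fun τ => p * τ ^ (p - 1) * f τ + τ ^ p * deriv f τ)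
      (p * ((p - 1) * t ^ (p - 1 - 1)) * f t + p * t ^ (p - 1) * deriv f t +
        (p * t ^ (p - 1) * deriv f t + t ^ p * deriv (deriv f) t)) t :=
    (((hasDerivAt_rpow_const (Or.inl ht)).const_mul p).mul hf.self_of_nhds.hasDerivAt).add
      ((hasDerivAt_rpow_const (Or.inl ht)).mul hf'.hasDerivAt)
  rw [iteratedDeriv_succ, iteratedDeriv_one, hderiv.deriv_eq, hderiv_deriv.deriv,
    iteratedDeriv_succ, iteratedDeriv_one]
  ring

end RpowMul

theorem epdOperator_rpow_sub_one_mul (μ : ℝ) {v : ℝ → ℝ → ℝ} {t x : ℝ} (ht : t ≠ 0)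
    (hv : ∀ᶠ τ in 𝓝 t, DifferentiableAt ℝ (fun σ => v σ x) τ)
    (hv' : DifferentiableAt ℝ (deriv fun σ => v σ x) t) :
    epdOperator (2 - μ) (fun t x => t ^ (μ - 1) * v t x) t x =
      t ^ (μ - 1) * epdOperator μ v t x := by
  unfold epdOperator
  rw [iteratedDeriv_two_rpow_mul ht hv hv', (hasDerivAt_rpow_mul ht hv.self_of_nhds).deriv,
    iteratedDeriv_const_mul_field]
  simp only [rpow_sub_one ht]
  field_simp
  ring

theorem ContDiffOn.eventually_differentiableAt_and_differentiableAt_deriv {f : ℝ → ℝ}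
    {s : Set ℝ} {t : ℝ} (hf : ContDiffOn ℝ 2 f s) (hs : IsOpen s) (ht : t ∈ s) :
    (∀ᶠ τ in 𝓝 t, DifferentiableAt ℝ f τ) ∧ DifferentiableAt ℝ (deriv f) t :=
  ⟨(hf.differentiableOn (by norm_num)).eventually_differentiableAt (hs.mem_nhds ht),
    ((hf.deriv_of_isOpen hs (by norm_num) : ContDiffOn ℝ 1 _ s).differentiableOn
      one_ne_zero).differentiableAt (hs.mem_nhds ht)⟩

theorem ContDiffOn.comp_prodMk_left {n : WithTop ℕ∞} {v : ℝ → ℝ → ℝ} {s : Set ℝ}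
    (hv : ContDiffOn ℝ n (fun z : ℝ × ℝ => v z.1 z.2) (s ×ˢ univ)) (x : ℝ) :
    ContDiffOn ℝ n (fun τ => v τ x) s :=
  hv.comp (contDiff_prodMk_left x).contDiffOn fun _ hτ => ⟨hτ, mem_univ x⟩

/-- The transformation `v♯ = t^{μ−1} v` exchanges the EPD equations with
parameters `μ` and `2−μ`, and transforms the data accordingly. -/
theorem epd_sharp_transformation
    (μ : ℝ) (v : ℝ → ℝ → ℝ)
    (hv : ContDiffOn ℝ 2 (fun z : ℝ × ℝ => v z.1 z.2) (Ioi 0 ×ˢ univ))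
    (vs : ℝ → ℝ → ℝ) (hvs : ∀ t x, vs t x = t ^ (μ - 1) * v t x) :
    ((∀ t > (0 : ℝ), ∀ x : ℝ,
        iteratedDeriv 2 (fun τ => v τ x) t - iteratedDeriv 2 (fun y => v t y) x +
          μ / t * deriv (fun τ => v τ x) t = 0) ↔
      (∀ t > (0 : ℝ), ∀ x : ℝ,
        iteratedDeriv 2 (fun τ => vs τ x) t - iteratedDeriv 2 (fun y => vs t y) x +
          (2 - μ) / t * deriv (fun τ => vs τ x) t = 0)) ∧
    (∀ s > (0 : ℝ), ∀ v₁ : ℝ → ℝ,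
      (∀ x : ℝ, v s x = 0) →
      (∀ x : ℝ, deriv (fun τ => v τ x) s = v₁ x) →
      (∀ x : ℝ, vs s x = 0) ∧
      (∀ x : ℝ, deriv (fun τ => vs τ x) s = s ^ (μ - 1) * v₁ x)) := by
  obtain rfl : vs = fun t x => t ^ (μ - 1) * v t x := funext₂ hvs
  have hreg : ∀ t > (0 : ℝ), ∀ x, (∀ᶠ τ in 𝓝 t, DifferentiableAt ℝ (fun σ => v σ x) τ) ∧
      DifferentiableAt ℝ (deriv fun σ => v σ x) t := fun t ht x =>
    (hv.comp_prodMk_left x).eventually_differentiableAt_and_differentiableAt_deriv isOpen_Ioi ht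
  have hsharp : ∀ t > (0 : ℝ), ∀ x, epdOperator (2 - μ) (fun t x => t ^ (μ - 1) * v t x) t x =
      t ^ (μ - 1) * epdOperator μ v t x := fun t ht x =>
    epdOperator_rpow_sub_one_mul μ ht.ne' (hreg t ht x).1 (hreg t ht x).2
  refine ⟨forall₂_congr fun t ht => forall_congr' fun x => ?_, fun s hs v₁ hv₀ hv₁ => ?_⟩
  · show epdOperator μ v t x = 0 ↔
      epdOperator (2 - μ) (fun t x => t ^ (μ - 1) * v t x) t x = 0
    rw [hsharp t ht x, mul_eq_zero, or_iff_right (rpow_pos_of_pos ht _).ne']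
  · refine ⟨fun x => by simp [hv₀ x], fun x => ?_⟩
    rw [(hasDerivAt_rpow_mul hs.ne' (hreg s hs x).1.self_of_nhds).deriv, hv₀ x, hv₁ x]
    ring
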